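/- arXiv:2409.13482 — 2 statements merged into one kernel-verified Lean document; each statement's English description precedes it below -/
import Mathlib

section
/- Convergence via the local approximation property. Let X be a real Hilbert space, F : X → X a map, and x† ∈ X. For each L ∈ [0, 1) let φ_L : X → X be a bijection whose inverse is Lipschitz with constant at most 1/(1 − L). Assume there exist a constant C > 0 and an index function ψ (a continuous, strictly increasing function ψ : [0,∞) → [0,∞) with ψ(0) = 0) such that ‖F(x†) − φ_L(x†)‖ ≤ C (1 − L) ψ(1 − L) for all L sufficiently close to 1 (the local approximation property). Let L : (0,∞) → [0,1) be a parameter choice rule with L(δ) → 1 and δ/(1 − L(δ)) → 0 as δ → 0, and for each δ > 0 let z^δ ∈ X satisfy ‖z^δ − F(x†)‖ ≤ δ. Then ‖φ_{L(δ)}^{-1}(z^δ) − x†‖ → 0 as δ → 0. -/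
open Filter Topology

/-!
Apply the Lipschitz bound of `Φinv L` between `z^δ` and `Φ L x†`, whose image is `x†`: the
triangle inequality through `F x†` splits the error into the propagated noise `δ / (1 - L)` and
the approximation error, which after division by `1 - L` is `C ψ(1 - L)`. Both tend to zero
under the parameter choice, the second by continuity of `ψ` at `0`.
-/

theorem norm_leftInverse_apply_sub_le {E : Type*} [SeminormedAddCommGroup E]
    {F Φ Φinv : E → E} {x z : E} {L δ C a : ℝ} (hL : L < 1)
    (hinv : Function.LeftInverse Φinv Φ)
    (hlip : ∀ z₁ z₂ : E, ‖Φinv z₁ - Φinv z₂‖ ≤ (1 / (1 - L)) * ‖z₁ - z₂‖)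
    (hz : ‖z - F x‖ ≤ δ) (happrox : ‖F x - Φ x‖ ≤ C * ((1 - L) * a)) :
    ‖Φinv z - x‖ ≤ δ / (1 - L) + C * a := by
  have h1L : 0 < 1 - L := sub_pos.mpr hL
  calc ‖Φinv z - x‖ = ‖Φinv z - Φinv (Φ x)‖ := by rw [hinv x]
    _ ≤ (1 / (1 - L)) * ‖z - Φ x‖ := hlip z (Φ x)
    _ ≤ (1 / (1 - L)) * (δ + C * ((1 - L) * a)) := by
        gcongr
        exact (norm_sub_le_norm_sub_add_norm_sub z (F x) (Φ x)).trans (add_le_add hz happrox)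
    _ = δ / (1 - L) + C * a := by field_simp

theorem stmt_8_general {X : Type*} [NormedAddCommGroup X]
    (F : X → X) (xdag : X)
    (Φ Φinv : ℝ → X → X)
    (hbij : ∀ L ∈ Set.Ico (0 : ℝ) 1,
      Function.LeftInverse (Φinv L) (Φ L) ∧ Function.RightInverse (Φinv L) (Φ L))
    (hlip : ∀ L ∈ Set.Ico (0 : ℝ) 1, ∀ z₁ z₂ : X,
      ‖Φinv L z₁ - Φinv L z₂‖ ≤ (1 / (1 - L)) * ‖z₁ - z₂‖)
    (C : ℝ)
    (ψ : ℝ → ℝ) (hψ_cont : ContinuousOn ψ (Set.Ici 0)) (hψ0 : ψ 0 = 0)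
    (happrox : ∀ᶠ L in nhdsWithin (1 : ℝ) (Set.Iio 1),
      ‖F xdag - Φ L xdag‖ ≤ C * ((1 - L) * ψ (1 - L)))
    (Lr : ℝ → ℝ) (hLr_mem : ∀ δ > (0 : ℝ), Lr δ ∈ Set.Ico (0 : ℝ) 1)
    (hLr_lim : Tendsto Lr (nhdsWithin (0 : ℝ) (Set.Ioi 0)) (nhds 1))
    (hquot : Tendsto (fun δ => δ / (1 - Lr δ)) (nhdsWithin (0 : ℝ) (Set.Ioi 0)) (nhds 0))
    (z : ℝ → X) (hz : ∀ δ > (0 : ℝ), ‖z δ - F xdag‖ ≤ δ) :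
    Tendsto (fun δ => ‖Φinv (Lr δ) (z δ) - xdag‖)
      (nhdsWithin (0 : ℝ) (Set.Ioi 0)) (nhds 0) := by
  have hLr_lt : ∀ᶠ δ in 𝓝[>] 0, Lr δ < 1 :=
    eventually_nhdsWithin_of_forall fun δ hδ => (hLr_mem δ hδ).2
  have hLr_left : Tendsto Lr (𝓝[>] 0) (𝓝[<] 1) :=
    tendsto_nhdsWithin_of_tendsto_nhds_of_eventually_within _ hLr_lim hLr_lt
  have hgap : Tendsto (fun δ => 1 - Lr δ) (𝓝[>] 0) (𝓝[≥] 0) :=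
    tendsto_nhdsWithin_of_tendsto_nhds_of_eventually_within _
      (by simpa using hLr_lim.const_sub 1)
      (hLr_lt.mono fun δ h => Set.mem_Ici.mpr (sub_nonneg.mpr h.le))
  have hψ_gap : Tendsto (fun δ => ψ (1 - Lr δ)) (𝓝[>] 0) (𝓝 0) := by
    have hψ_at_zero := (hψ_cont 0 Set.self_mem_Ici).tendsto
    rw [hψ0] at hψ_at_zero
    exact hψ_at_zero.comp hgap
  have hbound : Tendsto (fun δ => δ / (1 - Lr δ) + C * ψ (1 - Lr δ)) (𝓝[>] 0) (𝓝 0) := by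
    simpa using hquot.add (hψ_gap.const_mul C)
  refine squeeze_zero' (Eventually.of_forall fun δ => norm_nonneg _) ?_ hbound
  filter_upwards [hLr_left happrox, self_mem_nhdsWithin] with δ happrox_δ hδ
  have hmem := hLr_mem δ hδ
  exact norm_leftInverse_apply_sub_le hmem.2 (hbij _ hmem).1 (hlip _ hmem) (hz δ hδ) happrox_δ

/-- Convergence via the local approximation property. If the family of
bijections `Φ L` (with inverses `Φinv L` Lipschitz with constant `1/(1 − L)`)
satisfies `‖F x† − Φ L x†‖ ≤ C (1 − L) ψ(1 − L)` for an index function `ψ` and all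
`L` sufficiently close to `1`, and the parameter choice `L(δ)` satisfies
`L(δ) → 1` and `δ/(1 − L(δ)) → 0` as `δ → 0`, then `‖Φinv (L δ) z^δ − x†‖ → 0`. -/
theorem stmt_8 {X : Type*} [NormedAddCommGroup X] [InnerProductSpace ℝ X] [CompleteSpace X]
    (F : X → X) (xdag : X)
    (Φ Φinv : ℝ → X → X)
    (hbij : ∀ L ∈ Set.Ico (0 : ℝ) 1,
      Function.LeftInverse (Φinv L) (Φ L) ∧ Function.RightInverse (Φinv L) (Φ L))
    (hlip : ∀ L ∈ Set.Ico (0 : ℝ) 1, ∀ z₁ z₂ : X,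
      ‖Φinv L z₁ - Φinv L z₂‖ ≤ (1 / (1 - L)) * ‖z₁ - z₂‖)
    (C : ℝ) (hC : 0 < C)
    (ψ : ℝ → ℝ) (hψ_cont : ContinuousOn ψ (Set.Ici 0))
    (hψ_mono : StrictMonoOn ψ (Set.Ici 0)) (hψ0 : ψ 0 = 0)
    (happrox : ∀ᶠ L in nhdsWithin (1 : ℝ) (Set.Iio 1),
      ‖F xdag - Φ L xdag‖ ≤ C * ((1 - L) * ψ (1 - L)))
    (Lr : ℝ → ℝ) (hLr_mem : ∀ δ > (0 : ℝ), Lr δ ∈ Set.Ico (0 : ℝ) 1)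
    (hLr_lim : Tendsto Lr (nhdsWithin (0 : ℝ) (Set.Ioi 0)) (nhds 1))
    (hquot : Tendsto (fun δ => δ / (1 - Lr δ)) (nhdsWithin (0 : ℝ) (Set.Ioi 0)) (nhds 0))
    (z : ℝ → X) (hz : ∀ δ > (0 : ℝ), ‖z δ - F xdag‖ ≤ δ) :
    Tendsto (fun δ => ‖Φinv (Lr δ) (z δ) - xdag‖)
      (nhdsWithin (0 : ℝ) (Set.Ioi 0)) (nhds 0) :=
  stmt_8_general F xdag Φ Φinv hbij hlip C ψ hψ_cont hψ0 happrox Lr hLr_mem hLr_lim hquot z hz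
end

section
/- Convergence via the inversion error. Let X be a real Hilbert space, F : X → X a map, and x† ∈ X. For each L ∈ [0, 1) let φ_L : X → X be a bijection whose inverse is Lipschitz with constant at most 1/(1 − L). Assume the inversion error satisfies ‖φ_L^{-1}(F(x†)) − x†‖ → 0 as L → 1. Let L : (0,∞) → [0,1) be a parameter choice rule with L(δ) → 1 and δ/(1 − L(δ)) → 0 as δ → 0, and for each δ > 0 let z^δ ∈ X satisfy ‖z^δ − F(x†)‖ ≤ δ. Then ‖φ_{L(δ)}^{-1}(z^δ) − x†‖ → 0 as δ → 0. -/
/-!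
By the triangle inequality through `φ_L⁻¹(F x†)`, the reconstruction error splits into the
propagated data error, at most `δ / (1 - L(δ))` by the Lipschitz bound on `φ_L⁻¹`, and the
inversion error at `L(δ)`. The first vanishes by the parameter choice, the second because
`L(δ) → 1` from below.
-/

open Filter Topology

theorem tendsto_norm_sub_of_lipschitz_of_tendsto {α X : Type*} [SeminormedAddCommGroup X]
    {l : Filter α} {G : α → X → X} {K ε : α → ℝ} {y x : X} {z : α → X}
    (hG : ∀ᶠ a in l, ‖G a (z a) - G a y‖ ≤ K a * ‖z a - y‖)
    (hK : ∀ᶠ a in l, 0 ≤ K a) (hz : ∀ᶠ a in l, ‖z a - y‖ ≤ ε a)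
    (hKε : Tendsto (fun a => K a * ε a) l (𝓝 0))
    (happrox : Tendsto (fun a => ‖G a y - x‖) l (𝓝 0)) :
    Tendsto (fun a => ‖G a (z a) - x‖) l (𝓝 0) := by
  refine squeeze_zero' (Eventually.of_forall fun _ => norm_nonneg _) ?_
    (by simpa using hKε.add happrox)
  filter_upwards [hG, hK, hz] with a hGa hKa hza
  calc ‖G a (z a) - x‖ ≤ ‖G a (z a) - G a y‖ + ‖G a y - x‖ :=
        norm_sub_le_norm_sub_add_norm_sub _ _ _
    _ ≤ K a * ε a + ‖G a y - x‖ := by gcongr; exact hGa.trans (by gcongr)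

theorem stmt_9_general {X : Type*} [NormedAddCommGroup X]
    (F : X → X) (xdag : X)
    (Φinv : ℝ → X → X)
    (hlip : ∀ L ∈ Set.Ico (0 : ℝ) 1, ∀ z₁ z₂ : X,
      ‖Φinv L z₁ - Φinv L z₂‖ ≤ (1 / (1 - L)) * ‖z₁ - z₂‖)
    (hinv_err : Tendsto (fun L => ‖Φinv L (F xdag) - xdag‖)
      (nhdsWithin (1 : ℝ) (Set.Iio 1)) (nhds 0))
    (Lr : ℝ → ℝ) (hLr_mem : ∀ δ > (0 : ℝ), Lr δ ∈ Set.Ico (0 : ℝ) 1)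
    (hLr_lim : Tendsto Lr (nhdsWithin (0 : ℝ) (Set.Ioi 0)) (nhds 1))
    (hquot : Tendsto (fun δ => δ / (1 - Lr δ)) (nhdsWithin (0 : ℝ) (Set.Ioi 0)) (nhds 0))
    (z : ℝ → X) (hz : ∀ δ > (0 : ℝ), ‖z δ - F xdag‖ ≤ δ) :
    Tendsto (fun δ => ‖Φinv (Lr δ) (z δ) - xdag‖)
      (nhdsWithin (0 : ℝ) (Set.Ioi 0)) (nhds 0) := by
  have hmem : ∀ᶠ δ in 𝓝[>] 0, Lr δ ∈ Set.Ico (0 : ℝ) 1 :=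
    eventually_mem_nhdsWithin.mono hLr_mem
  have hLr : Tendsto Lr (𝓝[>] 0) (𝓝[<] 1) :=
    tendsto_nhdsWithin_iff.2 ⟨hLr_lim, hmem.mono fun _ h => h.2⟩
  exact tendsto_norm_sub_of_lipschitz_of_tendsto (K := fun δ => 1 / (1 - Lr δ)) (ε := id)
    (hmem.mono fun _ h => hlip _ h _ _)
    (hmem.mono fun _ h => one_div_nonneg.2 (sub_nonneg.2 h.2.le))
    (eventually_mem_nhdsWithin.mono hz) (hquot.congr fun δ => (one_div_mul_eq_div _ _).symm)
    (hinv_err.comp hLr)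

/-- Convergence via the inversion error. If the inversion error
`‖Φinv L (F x†) − x†‖` tends to `0` as `L → 1` and the parameter choice `L(δ)`
satisfies `L(δ) → 1` and `δ/(1 − L(δ)) → 0` as `δ → 0`, then
`‖Φinv (L δ) z^δ − x†‖ → 0` as `δ → 0`. -/
theorem stmt_9 {X : Type*} [NormedAddCommGroup X] [InnerProductSpace ℝ X] [CompleteSpace X]
    (F : X → X) (xdag : X)
    (Φ Φinv : ℝ → X → X)
    (hbij : ∀ L ∈ Set.Ico (0 : ℝ) 1,
      Function.LeftInverse (Φinv L) (Φ L) ∧ Function.RightInverse (Φinv L) (Φ L))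
    (hlip : ∀ L ∈ Set.Ico (0 : ℝ) 1, ∀ z₁ z₂ : X,
      ‖Φinv L z₁ - Φinv L z₂‖ ≤ (1 / (1 - L)) * ‖z₁ - z₂‖)
    (hinv_err : Tendsto (fun L => ‖Φinv L (F xdag) - xdag‖)
      (nhdsWithin (1 : ℝ) (Set.Iio 1)) (nhds 0))
    (Lr : ℝ → ℝ) (hLr_mem : ∀ δ > (0 : ℝ), Lr δ ∈ Set.Ico (0 : ℝ) 1)
    (hLr_lim : Tendsto Lr (nhdsWithin (0 : ℝ) (Set.Ioi 0)) (nhds 1))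
    (hquot : Tendsto (fun δ => δ / (1 - Lr δ)) (nhdsWithin (0 : ℝ) (Set.Ioi 0)) (nhds 0))
    (z : ℝ → X) (hz : ∀ δ > (0 : ℝ), ‖z δ - F xdag‖ ≤ δ) :
    Tendsto (fun δ => ‖Φinv (Lr δ) (z δ) - xdag‖)
      (nhdsWithin (0 : ℝ) (Set.Ioi 0)) (nhds 0) :=
  stmt_9_general F xdag Φinv hlip hinv_err Lr hLr_mem hLr_lim hquot z hz
end
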